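/- arXiv:1604.00616 — 6 statements merged into one kernel-verified Lean document; each statement's English description precedes it below -/
import Mathlib

section
/- Let f : ℝ^d → ℂ be any function and let h_1, ..., h_s ∈ ℝ^d. Suppose for each i = 1, ..., s there is a natural number n_i ≥ 1 with dim span{f, τ_{h_i}(f), ..., (τ_{h_i})^{n_i}(f)} ≤ n_i. Then for every (m_1, ..., m_s) ∈ ℤ^s the translate τ_{m_1 h_1 + ... + m_s h_s}(f) belongs to the finite-dimensional space W = span{ (τ_{h_1})^{a_1}(τ_{h_2})^{a_2} ⋯ (τ_{h_s})^{a_s}(f) : 0 ≤ a_i < n_i, i = 1, ..., s }. In particular, the span of all translates τ_g(f) with g in the subgroup h_1ℤ + ... + h_sℤ has dimension at most n_1 n_2 ⋯ n_s. -/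
/-! For a single direction `v`, the Krylov spaces `V k = span {τ_v^a f : a < k}` increase and
`V (n + 1)` has dimension at most `n`, so `V (k + 1) = V k` for some `k ≤ n`. This `V k` is then
`τ_v`-invariant, hence, being finite-dimensional, also `τ_v⁻¹`-invariant, and it contains every
`τ_v^m f` with `m ∈ ℤ`. For several directions, the relation "the translates of `f` by `A` lie
in the span of its translates by `B`" is compatible with sums of sets, because a translation maps
the span of the translates by `B` onto the span of those by `B + c`. Summing the one-direction case
over `i` compares `ℤ h 1 + ⋯ + ℤ h s` with the box `∑ i, {0, …, n i - 1} • h i`. -/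

open Submodule Set Pointwise

section Krylov

variable {K V : Type*} [DivisionRing K] [AddCommGroup V] [Module K V]

def krylovSpan (T : V ≃ₗ[K] V) (x : V) (n : ℕ) : Submodule K V :=
  span K (range fun k : Fin n => (T ^ (k : ℕ)) x)

instance (T : V ≃ₗ[K] V) (x : V) (n : ℕ) : FiniteDimensional K (krylovSpan T x n) :=
  FiniteDimensional.span_of_finite K (finite_range _)

theorem krylovSpan_mono (T : V ≃ₗ[K] V) (x : V) : Monotone (krylovSpan T x) :=
  monotone_nat_of_le_succ fun k => span_mono <| by
    rintro - ⟨a, rfl⟩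
    exact ⟨a.castSucc, rfl⟩

theorem map_krylovSpan_le (T : V ≃ₗ[K] V) (x : V) (n : ℕ) :
    (krylovSpan T x n).map (T : V →ₗ[K] V) ≤ krylovSpan T x (n + 1) := by
  rw [krylovSpan, map_span, span_le]
  rintro - ⟨-, ⟨a, rfl⟩, rfl⟩
  exact subset_span ⟨a.succ, by simp [pow_succ']⟩

theorem Submodule.exists_succ_eq_of_finrank_le {p : ℕ → Submodule K V} (hp : Monotone p)
    [∀ k, FiniteDimensional K (p k)] {n : ℕ} (h : Module.finrank K (p (n + 1)) ≤ n) :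
    ∃ k ≤ n, p (k + 1) = p k := by
  by_contra! hne
  have hgrow : ∀ k ≤ n + 1, k ≤ Module.finrank K (p k) := by
    intro k
    induction k with
    | zero => simp
    | succ k ih =>
      intro hk
      have hlt := Submodule.finrank_lt_finrank_of_lt
        ((hp (Nat.le_add_right k 1)).lt_of_ne (hne k (by omega)).symm)
      omega
  have := hgrow (n + 1) le_rfl
  omega

theorem zpow_apply_mem_krylovSpan (T : V ≃ₗ[K] V) (x : V) {n : ℕ}
    (hrank : Module.rank K (krylovSpan T x (n + 1)) ≤ n) (m : ℤ) :
    (T ^ m) x ∈ krylovSpan T x n := by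
  have hfin : Module.finrank K (krylovSpan T x (n + 1)) ≤ n := by
    rw [← Module.finrank_eq_rank] at hrank
    exact_mod_cast hrank
  obtain ⟨k, hkn, hk⟩ := exists_succ_eq_of_finrank_le (krylovSpan_mono T x) hfin
  have hinv : (krylovSpan T x k).map (T : V →ₗ[K] V) = krylovSpan T x k :=
    eq_of_le_of_finrank_eq ((map_krylovSpan_le T x k).trans hk.le) (T.finrank_map_eq _)
  have hx : x ∈ krylovSpan T x k := hk ▸ subset_span ⟨0, by simp⟩
  have hT : T ∈ MulAction.stabilizer (V ≃ₗ[K] V) (krylovSpan T x k) := hinv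
  have hTm := smul_mem_pointwise_smul x (T ^ m) _ hx
  rw [MulAction.mem_stabilizer_iff.mp (Subgroup.zpow_mem _ hT m)] at hTm
  exact krylovSpan_mono T x hkn hTm

end Krylov

section Shift

variable {E R M : Type*} [AddCommGroup E] [Semiring R] [AddCommMonoid M] [Module R M]

variable (R) in
/-- The paper's `τ_v`; Mathlib's `translate v` is the opposite shift `x ↦ g (x - v)`. -/
def shift (v : E) : (E → M) ≃ₗ[R] (E → M) :=
  LinearEquiv.funCongrLeft R M (Equiv.addRight v)

@[simp]
theorem shift_apply (v : E) (g : E → M) (x : E) : shift R v g x = g (x + v) := rfl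

theorem shift_shift (v w : E) (g : E → M) :
    shift R v (shift R w g) = shift R (v + w) g := by
  ext x
  simp [add_assoc]

variable (R M) in
def shiftHom : Multiplicative E →* ((E → M) ≃ₗ[R] (E → M)) :=
  MonoidHom.mk' (fun v => shift R v.toAdd) fun v w => by
    ext g : 1
    exact (shift_shift _ _ g).symm

theorem shift_pow (v : E) (k : ℕ) : shift R v ^ k = shift (M := M) R (k • v) :=
  (map_pow (shiftHom R M) (Multiplicative.ofAdd v) k).symm

theorem shift_zpow (v : E) (m : ℤ) : shift R v ^ m = shift (M := M) R (m • v) :=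
  (map_zpow (shiftHom R M) (Multiplicative.ofAdd v) m).symm

variable (R) in
def shiftSpan (f : E → M) (A : Set E) : Submodule R (E → M) :=
  span R ((fun v => shift R v f) '' A)

theorem shiftSpan_range {ι : Type*} (f : E → M) (g : ι → E) :
    shiftSpan R f (range g) = span R (range fun i => shift R (g i) f) := by
  rw [shiftSpan, ← range_comp]
  rfl

theorem shift_mem_shiftSpan_add {f g : E → M} {B C : Set E} (hg : g ∈ shiftSpan R f B) {c : E}
    (hc : c ∈ C) : shift R c g ∈ shiftSpan R f (B + C) := by
  have hmap : (shiftSpan R f B).map (shift (M := M) R c).toLinearMap ≤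
      shiftSpan R f (B + C) := by
    rw [shiftSpan, map_span, span_le]
    rintro - ⟨-, ⟨b, hb, rfl⟩, rfl⟩
    exact subset_span ⟨b + c, add_mem_add hb hc, by simp [shift_shift, add_comm]⟩
  exact hmap (mem_map_of_mem hg)

theorem shiftSpan_add_le_add_right {f : E → M} {A B : Set E}
    (h : shiftSpan R f A ≤ shiftSpan R f B) (C : Set E) :
    shiftSpan R f (A + C) ≤ shiftSpan R f (B + C) := by
  refine span_le.2 ?_
  rintro - ⟨-, ⟨a, ha, c, hc, rfl⟩, rfl⟩
  have ha' : shift R a f ∈ shiftSpan R f A := subset_span (mem_image_of_mem _ ha)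
  have hmem := shift_mem_shiftSpan_add (h ha') hc
  rwa [shift_shift, add_comm c] at hmem

theorem shiftSpan_add_le_add {f : E → M} {A B C D : Set E}
    (hAB : shiftSpan R f A ≤ shiftSpan R f B)
    (hCD : shiftSpan R f C ≤ shiftSpan R f D) :
    shiftSpan R f (A + C) ≤ shiftSpan R f (B + D) :=
  (shiftSpan_add_le_add_right hAB C).trans <| by
    rw [add_comm B, add_comm B]
    exact shiftSpan_add_le_add_right hCD B

theorem shiftSpan_sum_le_sum {ι : Type*} (s : Finset ι) {f : E → M} {A B : ι → Set E}
    (h : ∀ i ∈ s, shiftSpan R f (A i) ≤ shiftSpan R f (B i)) :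
    shiftSpan R f (∑ i ∈ s, A i) ≤ shiftSpan R f (∑ i ∈ s, B i) := by
  induction s using Finset.cons_induction with
  | empty => exact le_rfl
  | cons i s hi ih =>
    rw [Finset.sum_cons, Finset.sum_cons]
    exact shiftSpan_add_le_add (h i (Finset.mem_cons_self i s))
      (ih fun j hj => h j (Finset.mem_cons_of_mem hj))

end Shift

section ShiftKrylov

variable {E K : Type*} [AddCommGroup E] [DivisionRing K]

theorem shiftSpan_range_nsmul (f : E → K) (v : E) (n : ℕ) :
    shiftSpan K f (range fun k : Fin n => (k : ℕ) • v) = krylovSpan (shift K v) f n := by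
  simp only [shiftSpan_range, krylovSpan, shift_pow]

theorem shiftSpan_zmultiples_le (f : E → K) (v : E) {n : ℕ}
    (hrank : Module.rank K (shiftSpan K f (range fun k : Fin (n + 1) => (k : ℕ) • v)) ≤ n) :
    shiftSpan K f (range fun m : ℤ => m • v) ≤
      shiftSpan K f (range fun a : Fin n => (a : ℕ) • v) := by
  rw [shiftSpan_range_nsmul] at hrank ⊢
  rw [shiftSpan_range, span_le, range_subset_iff]
  intro m
  rw [← shift_zpow]
  exact zpow_apply_mem_krylovSpan _ f hrank m

end ShiftKrylov

theorem AddSubgroup.closure_range_subset_sum_range_zsmul {G ι : Type*} [AddCommGroup G]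
    [Fintype ι] (h : ι → G) :
    (AddSubgroup.closure (range h) : Set G) ⊆ ∑ i, range fun m : ℤ => m • h i := by
  intro v hv
  obtain ⟨m, rfl⟩ := AddSubgroup.mem_closure_range_iff_of_fintype.1 hv
  exact finsetSum_mem_finsetSum _ _ _ fun i _ => mem_range_self (m i)

open Cardinal in
theorem stmt_1_general (d s : ℕ) (f : (Fin d → ℝ) → ℂ) (h : Fin s → (Fin d → ℝ))
    (n : Fin s → ℕ)
    (hdim : ∀ i : Fin s,
      Module.rank ℂ ↥(Submodule.span ℂ
        (Set.range fun k : Fin (n i + 1) => fun x : Fin d → ℝ => f (x + (k : ℕ) • h i))) ≤ n i) :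
    (∀ m : Fin s → ℤ,
      (fun x : Fin d → ℝ => f (x + ∑ i, m i • h i)) ∈
        Submodule.span ℂ
          {g : (Fin d → ℝ) → ℂ | ∃ a : Fin s → ℕ, (∀ i, a i < n i) ∧
            g = fun x : Fin d → ℝ => f (x + ∑ i, a i • h i)}) ∧
    Module.rank ℂ ↥(Submodule.span ℂ
      {g : (Fin d → ℝ) → ℂ | ∃ v ∈ AddSubgroup.closure (Set.range h),
        g = fun x : Fin d → ℝ => f (x + v)}) ≤ ∏ i, n i := by
  set W := {g : (Fin d → ℝ) → ℂ | ∃ a : Fin s → ℕ, (∀ i, a i < n i) ∧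
    g = fun x : Fin d → ℝ => f (x + ∑ i, a i • h i)}
  have hbox : shiftSpan ℂ f (∑ i, range fun a : Fin (n i) => (a : ℕ) • h i) ≤ span ℂ W := by
    rw [shiftSpan, span_le]
    rintro - ⟨v, hv, rfl⟩
    obtain ⟨g, hg, rfl⟩ := (mem_fintype_sum _ _).1 hv
    choose a ha using hg
    exact subset_span ⟨fun i => a i, fun i => (a i).2, by ext; simp [ha]⟩
  have hkey : shiftSpan ℂ f (AddSubgroup.closure (range h)) ≤ span ℂ W :=
    calc shiftSpan ℂ f (AddSubgroup.closure (range h))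
        ≤ shiftSpan ℂ f (∑ i, range fun m : ℤ => m • h i) :=
          span_mono (image_mono (AddSubgroup.closure_range_subset_sum_range_zsmul h))
      _ ≤ shiftSpan ℂ f (∑ i, range fun a : Fin (n i) => (a : ℕ) • h i) :=
          shiftSpan_sum_le_sum _ fun i _ =>
            shiftSpan_zmultiples_le f (h i) (by rw [shiftSpan_range]; exact hdim i)
      _ ≤ span ℂ W := hbox
  refine ⟨fun m => hkey <| subset_span
    ⟨_, AddSubgroup.mem_closure_range_iff_of_fintype.2 ⟨m, rfl⟩, rfl⟩, ?_⟩
  have hW : W ⊆ range fun a : (∀ i, Fin (n i)) =>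
      fun x => f (x + ∑ i, (a i : ℕ) • h i) := by
    rintro - ⟨a, ha, rfl⟩
    exact ⟨fun i => ⟨a i, ha i⟩, rfl⟩
  calc _ ≤ Module.rank ℂ (span ℂ W) := rank_mono <| (span_mono ?_).trans hkey
    _ ≤ #W := rank_span_le W
    _ ≤ #(∀ i, Fin (n i)) := (mk_le_mk_of_subset hW).trans mk_range_le
    _ = ∏ i, n i := by simp
  rintro - ⟨v, hv, rfl⟩
  exact ⟨v, hv, rfl⟩

/-- If for each `i` the span of `{f, τ_{h i} f, …, (τ_{h i})^{n i} f}` has dimension at most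
`n i ≥ 1`, then every translate of `f` by an integer combination of the `h i` lies in
`W = span {(τ_{h 1})^{a 1} ⋯ (τ_{h s})^{a s} f : 0 ≤ a i < n i}`, and the span of all
translates of `f` by elements of the subgroup generated by the `h i` has dimension at most
`n 1 ⋯ n s`. -/
theorem stmt_1 (d s : ℕ) (f : (Fin d → ℝ) → ℂ) (h : Fin s → (Fin d → ℝ))
    (n : Fin s → ℕ) (hn : ∀ i, 1 ≤ n i)
    (hdim : ∀ i : Fin s,
      Module.rank ℂ ↥(Submodule.span ℂ
        (Set.range fun k : Fin (n i + 1) => fun x : Fin d → ℝ => f (x + (k : ℕ) • h i))) ≤ n i) :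
    (∀ m : Fin s → ℤ,
      (fun x : Fin d → ℝ => f (x + ∑ i, m i • h i)) ∈
        Submodule.span ℂ
          {g : (Fin d → ℝ) → ℂ | ∃ a : Fin s → ℕ, (∀ i, a i < n i) ∧
            g = fun x : Fin d → ℝ => f (x + ∑ i, a i • h i)}) ∧
    Module.rank ℂ ↥(Submodule.span ℂ
      {g : (Fin d → ℝ) → ℂ | ∃ v ∈ AddSubgroup.closure (Set.range h),
        g = fun x : Fin d → ℝ => f (x + v)}) ≤ ∏ i, n i :=
  stmt_1_general d s f h n hdim
end

section
/- Let f : ℝ^d → ℂ be a continuous function, let G be a dense additive subgroup of ℝ^d, and let W be a finite-dimensional subspace of the space of functions ℝ^d → ℂ such that τ_g(f) ∈ W for every g ∈ G. Then τ_y(f) ∈ W for every y ∈ ℝ^d; that is, the span of all translates of f is contained in W and hence is finite-dimensional. -/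
/-! Translation `y ↦ τ_y f` is continuous into the topology of pointwise convergence, in which a
finite-dimensional subspace is closed; so the translates landing in `W` form a closed set of
`y`, and it contains the dense set `G`. -/

theorem continuous_translate {X E : Type*} [TopologicalSpace X] [Add X] [ContinuousAdd X]
    [TopologicalSpace E] {f : X → E} (hf : Continuous f) :
    Continuous fun y : X => fun x : X => f (x + y) :=
  continuous_pi fun _ => hf.comp (continuous_const.add continuous_id)

theorem translate_mem_of_dense {X E : Type*} [TopologicalSpace X] [Add X] [ContinuousAdd X]
    [TopologicalSpace E] {f : X → E} (hf : Continuous f) {S : Set (X → E)} (hS : IsClosed S)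
    {D : Set X} (hD : Dense D) (hDS : ∀ g ∈ D, (fun x => f (x + g)) ∈ S) (y : X) :
    (fun x => f (x + y)) ∈ S :=
  closure_minimal hDS (hS.preimage (continuous_translate hf)) (hD y)

/-- Anselone–Korevaar-type closure argument: if `f` is continuous, `G` is a dense additive
subgroup of `ℝ^d`, and a finite-dimensional subspace `W` of functions contains all
translates `τ_g f` for `g ∈ G`, then `W` contains every translate `τ_y f`, `y ∈ ℝ^d`. -/
theorem stmt_2 (d : ℕ) (f : (Fin d → ℝ) → ℂ) (hf : Continuous f)
    (G : AddSubgroup (Fin d → ℝ)) (hG : Dense (G : Set (Fin d → ℝ)))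
    (W : Submodule ℂ ((Fin d → ℝ) → ℂ)) (hW : FiniteDimensional ℂ W)
    (htrans : ∀ g ∈ G, (fun x : Fin d → ℝ => f (x + g)) ∈ W) :
    ∀ y : Fin d → ℝ, (fun x : Fin d → ℝ => f (x + y)) ∈ W :=
  translate_mem_of_dense hf W.closed_of_finiteDimensional hG htrans
end

section
/- Every nonempty open subset V of ℝ^d contains a finite set of vectors {h_0, h_1, ..., h_s} which generates a dense additive subgroup of ℝ^d; that is, there exist finitely many vectors, all lying in V, such that the set of their integer linear combinations is dense in ℝ^d. -/
/-!
In `ℝ` every neighbourhood of `0` contains a set `{0, q, r}` with `q` rational and `r`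
irrational, and a pair with irrational ratio generates a dense subgroup. Taking products of
such sets shows the same in `ℝ^d`, since a product of dense subgroups is dense. Finally, for
`x ∈ V` and such a set `s` inside `V - x`, the translate `x + s` lies in `V`, and because
`0 ∈ s` the group it generates contains `x` and hence all of `s`.
-/

open Set Filter Topology

def HasSmallDenseGenerators (G : Type*) [AddGroup G] [TopologicalSpace G] : Prop :=
  ∀ U ∈ 𝓝 (0 : G), ∃ s : Set G, s.Finite ∧ 0 ∈ s ∧ s ⊆ U ∧
    Dense (AddSubgroup.closure s : Set G)

theorem Real.hasSmallDenseGenerators : HasSmallDenseGenerators ℝ := by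
  intro U hU
  obtain ⟨ε, hε, hball⟩ := Metric.mem_nhds_iff.1 hU
  obtain ⟨q, hq0, hqε⟩ := exists_rat_btwn hε
  obtain ⟨r, hr, hr0, hrε⟩ := exists_irrational_btwn hε
  refine ⟨{0, r, (q : ℝ)}, toFinite _, mem_insert _ _, ?_, ?_⟩
  · refine insert_subset (hball (Metric.mem_ball_self hε)) (pair_subset_iff.2 ⟨?_, ?_⟩) <;>
      apply hball <;> rw [Real.ball_eq_Ioo] <;> constructor <;> linarith
  · exact (dense_addSubgroupClosure_pair_iff.2 (hr.div_ratCast (q := q) (mod_cast hq0.ne'))).mono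
      (AddSubgroup.closure_mono (subset_insert _ _))

theorem HasSmallDenseGenerators.pi {ι : Type*} [Finite ι] {G : ι → Type*}
    [∀ i, AddGroup (G i)] [∀ i, TopologicalSpace (G i)]
    (hG : ∀ i, HasSmallDenseGenerators (G i)) : HasSmallDenseGenerators (∀ i, G i) := by
  intro U hU
  rw [nhds_pi, Filter.mem_pi] at hU
  obtain ⟨I, -, t, ht, htU⟩ := hU
  choose s hs_fin hs0 hst hs_dense using fun i => hG i (t i) (ht i)
  refine ⟨univ.pi s, Finite.pi hs_fin, fun i _ => hs0 i, ?_, ?_⟩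
  · calc univ.pi s ⊆ univ.pi t := pi_mono fun i _ => hst i
      _ ⊆ I.pi t := fun f hf i _ => hf i (mem_univ i)
      _ ⊆ U := htU
  · rw [AddSubgroup.closure_pi hs0, AddSubgroup.coe_pi]
    exact dense_pi univ fun i _ => hs_dense i

theorem AddSubgroup.closure_le_closure_image_add_left {G : Type*} [AddGroup G] {s : Set G}
    (hs : 0 ∈ s) (x : G) : closure s ≤ closure ((x + ·) '' s) := by
  have hx : x ∈ closure ((x + ·) '' s) := subset_closure ⟨0, hs, add_zero x⟩
  refine (closure_le _).2 fun y hy => ?_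
  simpa using add_mem (neg_mem hx) (subset_closure ⟨y, hy, rfl⟩)

theorem HasSmallDenseGenerators.exists_finite_subset_dense_closure {G : Type*} [AddGroup G]
    [TopologicalSpace G] [ContinuousAdd G] (hG : HasSmallDenseGenerators G) {V : Set G}
    (hV : IsOpen V) (hVne : V.Nonempty) :
    ∃ t ⊆ V, t.Finite ∧ Dense (AddSubgroup.closure t : Set G) := by
  obtain ⟨x, hx⟩ := hVne
  have hU : (x + ·) ⁻¹' V ∈ 𝓝 (0 : G) :=
    (continuous_const_add x).continuousAt.preimage_mem_nhds (by simpa using hV.mem_nhds hx)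
  obtain ⟨s, hs_fin, hs0, hsU, hs_dense⟩ := hG _ hU
  exact ⟨_, image_subset_iff.2 hsU, hs_fin.image _,
    hs_dense.mono (AddSubgroup.closure_le_closure_image_add_left hs0 x)⟩

/-- Every nonempty open subset of `ℝ^d` contains finitely many vectors generating a dense
additive subgroup of `ℝ^d`. -/
theorem stmt_3 (d : ℕ) (V : Set (Fin d → ℝ)) (hV : IsOpen V) (hVne : V.Nonempty) :
    ∃ (s : ℕ) (h : Fin s → (Fin d → ℝ)), (∀ i, h i ∈ V) ∧
      Dense ((AddSubgroup.closure (Set.range h) : AddSubgroup (Fin d → ℝ)) :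
        Set (Fin d → ℝ)) := by
  have hR : HasSmallDenseGenerators (Fin d → ℝ) :=
    .pi fun _ => Real.hasSmallDenseGenerators
  obtain ⟨t, htV, ht_fin, ht_dense⟩ := hR.exists_finite_subset_dense_closure hV hVne
  obtain ⟨s, h, -, rfl⟩ := ht_fin.fin_param
  exact ⟨s, h, fun i => htV (mem_range_self i), ht_dense⟩
end

section
/- Let f : ℝ^d → ℂ be a function and let T_1, ..., T_d > 0 be real numbers such that for every index k ∈ {1, ..., d} and every point (a_1, ..., a_{k-1}, a_{k+1}, ..., a_d) ∈ ℝ^{d-1}, the one-variable function x_k ↦ f(a_1, ..., a_{k-1}, x_k, a_{k+1}, ..., a_d) is a T_k-periodic trigonometric polynomial. Then f is a trigonometric polynomial in d variables with these periods: there exist a finite set F ⊂ ℤ^d and coefficients c_α ∈ ℂ (α ∈ F) such that f(x_1, ..., x_d) = Σ_{α ∈ F} c_α · exp(2πi(α_1 x_1/T_1 + ... + α_d x_d/T_d)) for all (x_1, ..., x_d) ∈ ℝ^d. No continuity of f is assumed. -/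
/-!
Induction on `d`, splitting off the last variable `t`. By induction each slice `y ↦ f (y, t)` is a
trigonometric polynomial; its finite set of frequencies ranges over a countable set, so one
frequency set `S` occurs for uncountably many `t`. Those slices lie in one finite-dimensional
space of functions, which has an interpolation formula `w = ∑ i, w (p i) • v i`. Hence, for fixed
`y`, the trigonometric polynomial `t ↦ f (y, t) - ∑ i, v i y * f (p i, t)` vanishes on an
uncountable set. Writing it as `z⁻ᴺ Q(z)` with `z = exp (2πit/T)` and a polynomial `Q`, and noting
that `z` takes each value only countably often, `Q` has infinitely many roots, so the difference
vanishes identically and `f` is a finite sum of products of trigonometric polynomials.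
-/

open Complex Set Submodule

namespace Submodule

variable {𝕜 X : Type*} [Field 𝕜] (V : Submodule 𝕜 (X → 𝕜)) [FiniteDimensional 𝕜 V]

theorem exists_fin_eval_injective :
    ∃ (n : ℕ) (p : Fin n → X), ∀ v ∈ V, (∀ i, v (p i) = 0) → v = 0 := by
  induction h : Module.finrank 𝕜 V using Nat.strong_induction_on generalizing V with
  | _ r ih =>
  by_cases hV : V = ⊥
  · exact ⟨0, Fin.elim0, fun v hv _ => by simpa [hV] using hv⟩
  obtain ⟨v₀, hv₀, hne⟩ := exists_mem_ne_zero_of_ne_bot hV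
  obtain ⟨x₀, hx₀⟩ := Function.ne_iff.mp hne
  let V' := V ⊓ LinearMap.ker (LinearMap.proj x₀ : (X → 𝕜) →ₗ[𝕜] 𝕜)
  have hlt : V' < V := inf_lt_left.mpr fun hle => hx₀ (hle hv₀)
  have := finiteDimensional_of_le hlt.le
  obtain ⟨n, p, hp⟩ := ih _ (h ▸ finrank_lt_finrank_of_lt hlt) V' rfl
  exact ⟨n + 1, Fin.cons x₀ p, fun v hv hvp => hp v ⟨hv, hvp 0⟩ fun i => hvp i.succ⟩

theorem exists_eq_sum_eval_smul :
    ∃ (n : ℕ) (p : Fin n → X) (v : Fin n → X → 𝕜),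
      (∀ i, v i ∈ V) ∧ ∀ w ∈ V, w = ∑ i, w (p i) • v i := by
  obtain ⟨n, p, hp⟩ := V.exists_fin_eval_injective
  obtain ⟨L, hL⟩ := (LinearMap.funLeft 𝕜 𝕜 p ∘ₗ V.subtype).exists_leftInverse_of_injective <| by
    rw [LinearMap.ker_eq_bot']
    exact fun w hw => Subtype.ext (hp w w.2 (congrFun hw))
  refine ⟨n, p, fun i => L fun j => if i = j then 1 else 0, fun i => (L _).2, fun w hw => ?_⟩
  have hw' := congr_arg Subtype.val (LinearMap.congr_fun hL ⟨w, hw⟩)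
  rw [LinearMap.comp_apply, LinearMap.pi_apply_eq_sum_univ L] at hw'
  simpa using hw'.symm

end Submodule

theorem exists_not_countable_fiber {Y B : Type*} [Uncountable Y] [Countable B] (g : Y → B) :
    ∃ b, ¬ (g ⁻¹' {b}).Countable := by
  by_contra! h
  have := countable_iUnion h
  rw [← preimage_iUnion, iUnion_of_singleton, preimage_univ] at this
  exact not_countable_univ this

theorem exists_eq_sum_mul_of_forall_mem_span {𝕜 X Y A : Type*} [Field 𝕜] [Uncountable Y]
    [Countable A] (e : A → X → 𝕜) (W : Submodule 𝕜 (Y → 𝕜))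
    (hW : ∀ φ ∈ W, ∀ E : Set Y, ¬ E.Countable → (∀ t ∈ E, φ t = 0) → φ = 0)
    (f : X → Y → 𝕜) (hfX : ∀ t, (fun x => f x t) ∈ span 𝕜 (range e)) (hfY : ∀ x, f x ∈ W) :
    ∃ (n : ℕ) (p : Fin n → X) (v : Fin n → X → 𝕜),
      (∀ i, v i ∈ span 𝕜 (range e)) ∧ ∀ x t, f x t = ∑ i, v i x * f (p i) t := by
  choose c hc using fun t => Finsupp.mem_span_range_iff_exists_finsupp.mp (hfX t)
  obtain ⟨S, hS⟩ := exists_not_countable_fiber fun t => (c t).support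
  let V := span 𝕜 (e '' S)
  have : FiniteDimensional 𝕜 V := FiniteDimensional.span_of_finite 𝕜 (S.finite_toSet.image e)
  have hV : ∀ t ∈ (fun t => (c t).support) ⁻¹' {S}, (fun x => f x t) ∈ V := by
    intro t ht
    rw [← hc t]
    exact sum_mem fun a ha => smul_mem _ _ (subset_span ⟨a, ht ▸ ha, rfl⟩)
  obtain ⟨n, p, v, hvV, hv⟩ := V.exists_eq_sum_eval_smul
  refine ⟨n, p, v, fun i => span_mono (image_subset_range e S) (hvV i), fun x => ?_⟩
  have hzero : f x - ∑ i, v i x • f (p i) = 0 := by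
    refine hW _ (sub_mem (hfY x) (sum_mem fun i _ => smul_mem _ _ (hfY _))) _ hS fun t ht => ?_
    have := congrFun (hv _ (hV t ht)) x
    simp only [Finset.sum_apply, Pi.smul_apply, smul_eq_mul] at this
    simp [this, mul_comm]
  intro t
  simpa [sub_eq_zero] using congrFun hzero t

noncomputable def trigMonomial (T : ℝ) (m : ℤ) (t : ℝ) : ℂ :=
  exp (2 * Real.pi * I * m * t / T)

def trigPoly (T : ℝ) : Submodule ℂ (ℝ → ℂ) :=
  span ℂ (range (trigMonomial T))

theorem sum_mul_exp_mem_trigPoly (T : ℝ) (S : Finset ℤ) (b : ℤ → ℂ) :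
    (fun t : ℝ => ∑ m ∈ S, b m * exp (2 * Real.pi * I * m * t / T)) ∈ trigPoly T := by
  convert sum_mem fun m (_ : m ∈ S) =>
    smul_mem (trigPoly T) (b m) (subset_span (mem_range_self m)) using 1
  ext t
  simp [trigMonomial]

theorem trigMonomial_eq_zpow (T : ℝ) (m : ℤ) (t : ℝ) :
    trigMonomial T m t = exp (2 * Real.pi * I * t / T) ^ m := by
  rw [trigMonomial, ← exp_int_mul]
  ring_nf

theorem countable_setOf_exp_eq {T : ℝ} (hT : T ≠ 0) (t₀ : ℝ) :
    {t : ℝ | exp (2 * Real.pi * I * t / T) = exp (2 * Real.pi * I * t₀ / T)}.Countable := by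
  refine (countable_range fun n : ℤ => t₀ + n * T).mono fun t ht => ?_
  obtain ⟨n, hn⟩ := exp_eq_exp_iff_exists_int.mp ht
  refine ⟨n, ?_⟩
  have hTc : (T : ℂ) ≠ 0 := ofReal_ne_zero.mpr hT
  field_simp at hn
  have : (t : ℂ) = t₀ + n * T := by rw [hn]; ring
  exact_mod_cast this.symm

open Polynomial in
theorem exists_polynomial_eval_eq_mul_pow {T : ℝ} {φ : ℝ → ℂ} (hφ : φ ∈ trigPoly T) :
    ∃ (Q : ℂ[X]) (N : ℕ), ∀ t : ℝ, Q.eval (exp (2 * Real.pi * I * t / T)) =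
      φ t * exp (2 * Real.pi * I * t / T) ^ N := by
  induction hφ using span_induction with
  | mem _ h =>
    obtain ⟨m, rfl⟩ := h
    refine ⟨X ^ m.toNat, (-m).toNat, fun t => ?_⟩
    rw [trigMonomial_eq_zpow, eval_pow, eval_X, ← zpow_natCast, ← zpow_natCast,
      ← zpow_add₀ (exp_ne_zero _)]
    congr 1
    omega
  | zero => exact ⟨0, 0, fun t => by simp⟩
  | add φ ψ _ _ hφ hψ =>
    obtain ⟨P, M, hP⟩ := hφ
    obtain ⟨Q, N, hQ⟩ := hψ
    refine ⟨P * X ^ N + Q * X ^ M, M + N, fun t => ?_⟩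
    simp only [eval_add, eval_mul, eval_pow, eval_X, hP, hQ, Pi.add_apply]
    ring
  | smul a φ _ hφ =>
    obtain ⟨Q, N, hQ⟩ := hφ
    refine ⟨a • Q, N, fun t => ?_⟩
    simp only [eval_smul, smul_eq_mul, hQ, Pi.smul_apply]
    ring

open Polynomial in
theorem eq_zero_of_mem_trigPoly_of_not_countable {T : ℝ} (hT : T ≠ 0) {φ : ℝ → ℂ}
    (hφ : φ ∈ trigPoly T) {E : Set ℝ} (hE : ¬ E.Countable) (h0 : ∀ t ∈ E, φ t = 0) :
    φ = 0 := by
  let z : ℝ → ℂ := fun t => exp (2 * Real.pi * I * t / T)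
  obtain ⟨Q, N, hQ⟩ := exists_polynomial_eval_eq_mul_pow hφ
  have hzE : (z '' E).Infinite := by
    intro hfin
    refine hE <| (hfin.countable.biUnion fun w hw => (?_ : (z ⁻¹' {w}).Countable)).mono
      fun t ht => mem_biUnion (mem_image_of_mem z ht) rfl
    obtain ⟨t₀, -, rfl⟩ := hw
    exact countable_setOf_exp_eq hT t₀
  have hQ0 : Q = 0 := Q.eq_zero_of_infinite_isRoot <| hzE.mono <| by
    rintro _ ⟨t, ht, rfl⟩
    simp [IsRoot, z, hQ, h0 t ht]
  funext t
  simpa [hQ0, exp_ne_zero, z] using (hQ t).symm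

noncomputable def mvTrigMonomial {d : ℕ} (T : Fin d → ℝ) (α : Fin d → ℤ) (x : Fin d → ℝ) : ℂ :=
  exp (2 * Real.pi * I * ∑ k, (α k : ℂ) * (x k : ℂ) / (T k : ℂ))

def mvTrigPoly {d : ℕ} (T : Fin d → ℝ) : Submodule ℂ ((Fin d → ℝ) → ℂ) :=
  span ℂ (range (mvTrigMonomial T))

theorem mvTrigMonomial_snoc {d : ℕ} (T : Fin (d + 1) → ℝ) (α : Fin d → ℤ) (m : ℤ)
    (x : Fin (d + 1) → ℝ) :
    mvTrigMonomial T (Fin.snoc α m) x =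
      mvTrigMonomial (Fin.init T) α (Fin.init x) *
        trigMonomial (T (Fin.last d)) m (x (Fin.last d)) := by
  rw [mvTrigMonomial, mvTrigMonomial, trigMonomial, ← exp_add, Fin.sum_univ_castSucc]
  simp only [Fin.snoc_castSucc, Fin.snoc_last, Fin.init]
  ring_nf

theorem mul_mem_mvTrigPoly_snoc {d : ℕ} {T : Fin (d + 1) → ℝ} {g : (Fin d → ℝ) → ℂ}
    (hg : g ∈ mvTrigPoly (Fin.init T)) {h : ℝ → ℂ} (hh : h ∈ trigPoly (T (Fin.last d))) :
    (fun x => g (Fin.init x) * h (x (Fin.last d))) ∈ mvTrigPoly T := by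
  let B := (LinearMap.mul ℂ ((Fin (d + 1) → ℝ) → ℂ)).compl₁₂
    (LinearMap.funLeft ℂ ℂ Fin.init) (LinearMap.funLeft ℂ ℂ fun x => x (Fin.last d))
  have hB : map₂ B (mvTrigPoly (Fin.init T)) (trigPoly (T (Fin.last d))) ≤ mvTrigPoly T := by
    rw [mvTrigPoly, trigPoly, map₂_span_span]
    refine span_le.mpr ?_
    rintro _ ⟨_, ⟨α, rfl⟩, _, ⟨m, rfl⟩, rfl⟩
    refine subset_span ⟨Fin.snoc α m, funext fun x => ?_⟩
    simp [B, mvTrigMonomial_snoc, LinearMap.funLeft]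
  exact hB (apply_mem_map₂ B hg hh)

theorem mem_mvTrigPoly_of_forall_mem_trigPoly {d : ℕ} {T : Fin d → ℝ} (hT : ∀ k, T k ≠ 0)
    {f : (Fin d → ℝ) → ℂ}
    (hf : ∀ k a, (fun t => f (Function.update a k t)) ∈ trigPoly (T k)) :
    f ∈ mvTrigPoly T := by
  induction d with
  | zero =>
    have : f = f 0 • mvTrigMonomial T 0 := by
      ext x
      simp [mvTrigMonomial, Subsingleton.elim x 0]
    rw [this]
    exact smul_mem _ _ (subset_span (mem_range_self 0))
  | succ d ih =>
    have hslice : ∀ t, (fun y => f (Fin.snoc y t)) ∈ mvTrigPoly (Fin.init T) := fun t =>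
      ih (fun k => hT _) fun k a => by simpa [Fin.snoc_update] using hf k.castSucc (Fin.snoc a t)
    have hfiber : ∀ y, (fun t => f (Fin.snoc y t)) ∈ trigPoly (T (Fin.last d)) := fun y => by
      simpa [Fin.update_snoc_last] using hf (Fin.last d) (Fin.snoc y 0)
    obtain ⟨n, p, v, hv, hfv⟩ := exists_eq_sum_mul_of_forall_mem_span _ _
      (fun φ hφ E hE => eq_zero_of_mem_trigPoly_of_not_countable (hT _) hφ hE)
      (fun y t => f (Fin.snoc y t)) hslice hfiber
    have : f = ∑ i, fun x => v i (Fin.init x) * f (Fin.snoc (p i) (x (Fin.last d))) := by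
      ext x
      simpa [Fin.snoc_init_self] using hfv (Fin.init x) (x (Fin.last d))
    rw [this]
    exact sum_mem fun i _ => mul_mem_mvTrigPoly_snoc (hv i) (hfiber (p i))

/-- A function `f : ℝ^d → ℂ` which, separately in each variable `k` (all other coordinates
being fixed arbitrarily), is a `T k`-periodic trigonometric polynomial, is a trigonometric
polynomial in `d` variables with periods `T 1, …, T d`. No continuity is assumed. -/
theorem stmt_7 (d : ℕ) (f : (Fin d → ℝ) → ℂ) (T : Fin d → ℝ) (hT : ∀ k, 0 < T k)
    (hsep : ∀ (k : Fin d) (a : Fin d → ℝ),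
      ∃ (S : Finset ℤ) (b : ℤ → ℂ), ∀ t : ℝ,
        f (Function.update a k t) =
          ∑ m ∈ S, b m * Complex.exp (2 * Real.pi * Complex.I * (m : ℂ) * (t : ℂ) / (T k : ℂ))) :
    ∃ (F : Finset (Fin d → ℤ)) (c : (Fin d → ℤ) → ℂ), ∀ x : Fin d → ℝ,
      f x = ∑ α ∈ F, c α *
        Complex.exp (2 * Real.pi * Complex.I * ∑ k, (α k : ℂ) * (x k : ℂ) / (T k : ℂ)) := by
  have hf : f ∈ mvTrigPoly T := mem_mvTrigPoly_of_forall_mem_trigPoly (fun k => (hT k).ne')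
    fun k a => by
      obtain ⟨S, b, hSb⟩ := hsep k a
      simpa only [← hSb] using sum_mul_exp_mem_trigPoly (T k) S b
  obtain ⟨c, hc⟩ := Finsupp.mem_span_range_iff_exists_finsupp.mp hf
  refine ⟨c.support, c, fun x => ?_⟩
  rw [← hc, Finsupp.sum]
  simp [mvTrigMonomial]
end

section
/- Let f : ℝ^d → ℂ be an exponential polynomial, i.e., f(x) = Σ_j P_j(x)·exp(λ_j · x) for finitely many λ_j ∈ ℂ^d and polynomials P_j ∈ ℂ[X_1,...,X_d]. Then there exists a natural number n such that f satisfies the Popoviciu–Ionescu functional equation of order n in ℝ^d: for all x, h ∈ ℝ^d, det[f(x + (i + j)h)]_{0 ≤ i, j ≤ n} = 0. -/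
/-! Restricted to a line `N ↦ x + N • h`, an exponential polynomial becomes a sequence
`a N = ∑ⱼ qⱼ(N) μⱼ ^ N` with `deg qⱼ ≤ D`, where `D` bounds the total degrees of the `Pⱼ` and so
does not depend on `x` or `h`. Expanding `qⱼ(i + i')` by Taylor's formula at `i'` factors the
Hankel matrix `(a (i + i'))` through a space of dimension `m * (D + 1)`, so every Hankel matrix
of larger size is singular. -/

open scoped BigOperators

open Polynomial

namespace Matrix

theorem det_mul_eq_zero_of_card_lt {R m ι : Type*} [CommRing R] [IsDomain R]
    [Fintype m] [DecidableEq m] [Fintype ι] (U : Matrix m ι R) (V : Matrix ι m R)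
    (h : Fintype.card ι < Fintype.card m) : (U * V).det = 0 := by
  by_contra hne
  have hrank := rank_of_det_ne_zero hne
  have := (rank_mul_le_left U V).trans (rank_le_card_width U)
  omega

def hankel {R : Type*} (a : ℕ → R) (n : ℕ) : Matrix (Fin n) (Fin n) R :=
  of fun i j => a (i + j)

end Matrix

namespace Polynomial

theorem eval_add_eq_sum_taylor_coeff {R : Type*} [CommRing R] {q : R[X]} {D : ℕ}
    (hq : q.natDegree ≤ D) (s t : R) :
    q.eval (s + t) = ∑ b : Fin (D + 1), (taylor t q).coeff b * s ^ (b : ℕ) := by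
  rw [← taylor_eval, Fin.sum_univ_eq_sum_range (fun b => (taylor t q).coeff b * s ^ b),
    eval_eq_sum_range' (n := D + 1) (by rw [natDegree_taylor]; omega)]

end Polynomial

open Matrix

theorem hankel_sum_eval_mul_pow_eq_mul {R ι : Type*} [CommRing R] [Fintype ι]
    (q : ι → R[X]) (μ : ι → R) {D : ℕ} (hq : ∀ j, (q j).natDegree ≤ D) (n : ℕ) :
    hankel (fun N => ∑ j, (q j).eval (N : R) * μ j ^ N) n =
      (of fun i p => (i : R) ^ (p.2 : ℕ) * μ p.1 ^ (i : ℕ) :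
          Matrix (Fin n) (ι × Fin (D + 1)) R) *
        (of fun p i' => (taylor (i' : R) (q p.1)).coeff p.2 * μ p.1 ^ (i' : ℕ) :
          Matrix (ι × Fin (D + 1)) (Fin n) R) := by
  ext i i'
  rw [hankel, of_apply, mul_apply, Fintype.sum_prod_type]
  refine Finset.sum_congr rfl fun j _ => ?_
  rw [Nat.cast_add, eval_add_eq_sum_taylor_coeff (hq j), Finset.sum_mul, pow_add]
  refine Finset.sum_congr rfl fun b _ => ?_
  rw [of_apply, of_apply]
  ring

theorem det_hankel_eq_zero_of_eq_sum_eval_mul_pow {R ι : Type*} [CommRing R] [IsDomain R]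
    [Fintype ι] {a : ℕ → R} (q : ι → R[X]) (μ : ι → R) {D n : ℕ}
    (hq : ∀ j, (q j).natDegree ≤ D) (ha : ∀ N, a N = ∑ j, (q j).eval (N : R) * μ j ^ N)
    (hn : Fintype.card ι * (D + 1) < n) : (hankel a n).det = 0 := by
  rw [funext ha, hankel_sum_eval_mul_pow_eq_mul q μ hq]
  exact det_mul_eq_zero_of_card_lt _ _ (by simpa only [Fintype.card_prod, Fintype.card_fin])

namespace MvPolynomial

variable {R σ : Type*} [CommRing R]

theorem natDegree_eval₂_C_le {g : σ → R[X]} {D : ℕ} (hg : ∀ k, (g k).natDegree ≤ D)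
    (P : MvPolynomial σ R) : (eval₂ Polynomial.C g P).natDegree ≤ P.totalDegree * D := by
  rw [eval₂_eq]
  refine natDegree_sum_le_of_forall_le _ _ fun s hs => ?_
  calc (Polynomial.C (P.coeff s) * ∏ k ∈ s.support, g k ^ s k).natDegree
      ≤ ∑ k ∈ s.support, s k * D := by
        refine natDegree_C_mul_le _ _ |>.trans <| (natDegree_prod_le _ _).trans ?_
        exact Finset.sum_le_sum fun k _ => natDegree_pow_le.trans (Nat.mul_le_mul_left _ (hg k))
    _ ≤ P.totalDegree * D := by
        rw [← Finset.sum_mul]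
        exact Nat.mul_le_mul_right _ (le_totalDegree hs)

noncomputable def restrictToLine (x h : σ → R) (P : MvPolynomial σ R) : R[X] :=
  eval₂ Polynomial.C (fun k => Polynomial.C (h k) * Polynomial.X + Polynomial.C (x k)) P

theorem natDegree_restrictToLine_le (x h : σ → R) (P : MvPolynomial σ R) :
    (restrictToLine x h P).natDegree ≤ P.totalDegree :=
  (natDegree_eval₂_C_le (fun _ => natDegree_linear_le) P).trans_eq (mul_one _)

theorem eval_restrictToLine (x h : σ → R) (P : MvPolynomial σ R) (t : R) :
    (restrictToLine x h P).eval t = eval (fun k => x k + t * h k) P := by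
  symm
  rw [restrictToLine, ← Polynomial.coe_evalRingHom, eval₂_comp_left,
    show (Polynomial.evalRingHom t).comp Polynomial.C = RingHom.id R from
      RingHom.ext fun _ => Polynomial.eval_C]
  show eval₂ (RingHom.id R) _ P = _
  congr 1
  funext k
  simp only [Function.comp_apply, Polynomial.coe_evalRingHom, Polynomial.eval_add,
    Polynomial.eval_mul, Polynomial.eval_C, Polynomial.eval_X]
  ring

end MvPolynomial

theorem Complex.exp_sum_mul_add_nat_mul {σ : Type*} [Fintype σ] (lam x h : σ → ℂ) (N : ℕ) :
    exp (∑ k, lam k * (x k + N * h k)) =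
      exp (∑ k, lam k * x k) * exp (∑ k, lam k * h k) ^ N := by
  rw [← exp_nat_mul, ← exp_add, Finset.mul_sum, ← Finset.sum_add_distrib]
  exact congrArg exp (Finset.sum_congr rfl fun k _ => by ring)

/-- Every exponential polynomial `f : ℝ^d → ℂ` satisfies the Popoviciu–Ionescu functional
equation of some order `n` in `ℝ^d`. -/
theorem stmt_9 (d : ℕ) (f : (Fin d → ℝ) → ℂ)
    (hf : ∃ (m : ℕ) (lam : Fin m → (Fin d → ℂ)) (P : Fin m → MvPolynomial (Fin d) ℂ),
      ∀ x : Fin d → ℝ,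
        f x = ∑ j, (MvPolynomial.eval (fun k => (x k : ℂ)) (P j)) *
          Complex.exp (∑ k, lam j k * (x k : ℂ))) :
    ∃ n : ℕ, ∀ x h : Fin d → ℝ,
      Matrix.det (Matrix.of fun i j : Fin (n + 1) =>
        f (x + ((i : ℕ) + (j : ℕ)) • h)) = 0 := by
  obtain ⟨m, lam, P, hP⟩ := hf
  set D := Finset.univ.sup fun j => (P j).totalDegree
  refine ⟨m * (D + 1), fun x h => ?_⟩
  refine det_hankel_eq_zero_of_eq_sum_eval_mul_pow (a := fun N => f (x + N • h))
    (fun j => Polynomial.C (Complex.exp (∑ k, lam j k * x k)) *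
      MvPolynomial.restrictToLine (fun k => (x k : ℂ)) (fun k => (h k : ℂ)) (P j))
    (fun j => Complex.exp (∑ k, lam j k * h k)) (D := D) (fun j => ?_) (fun N => ?_) (by simp)
  · exact (natDegree_C_mul_le _ _).trans <|
      (MvPolynomial.natDegree_restrictToLine_le _ _ _).trans <|
        Finset.le_sup (f := fun j => (P j).totalDegree) (Finset.mem_univ j)
  · simp only [hP, Pi.add_apply, nsmul_eq_mul, Pi.mul_apply, Pi.natCast_apply,
      Complex.ofReal_add, Complex.ofReal_mul, Complex.ofReal_natCast]
    refine Finset.sum_congr rfl fun j _ => ?_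
    rw [Polynomial.eval_mul, Polynomial.eval_C, MvPolynomial.eval_restrictToLine,
      Complex.exp_sum_mul_add_nat_mul]
    ring
end

section
/- Let f : ℝ^d → ℂ be a continuous function such that the span of all its translates, τ(f) = span{τ_h(f) : h ∈ ℝ^d}, is finite-dimensional, say of dimension n. Then for every h ∈ ℝ^d there exist scalars a_0(h), a_1(h), ..., a_n(h) ∈ ℂ, not all zero, such that a_0(h)f(x) + a_1(h)f(x+h) + ... + a_n(h)f(x+nh) = 0 for all x ∈ ℝ^d; consequently f satisfies the Popoviciu–Ionescu functional equation of order n in ℝ^d: det[f(x + (i + j)h)]_{0 ≤ i, j ≤ n} = 0 for all x, h ∈ ℝ^d. -/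
/-!
Each of the `n + 1` functions `x ↦ f (x + k • h)`, `k = 0, …, n`, lies in the span of the
translates of `f`, which has dimension `n`; a nontrivial linear relation among them is the
required recurrence. Evaluated at `x + j • h`, the recurrence says that the coefficient vector
annihilates the Hankel matrix `[f (x + (i + j) • h)]` from the left, so its determinant vanishes.
-/

open Matrix

section TranslateSpan

variable {G : Type*} [AddCommMonoid G]

/-- The space `τ(f)` of the paper. -/
def translateSpan (K : Type*) [Semiring K] (f : G → K) : Submodule K (G → K) :=
  Submodule.span K (Set.range fun h : G => fun x : G => f (x + h))

theorem exists_ne_zero_sum_mul_translate_eq_zero {K : Type*} [Field K] {f : G → K} {n : ℕ}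
    [FiniteDimensional K (translateSpan K f)] (hrank : Module.finrank K (translateSpan K f) = n)
    (g : Fin (n + 1) → G) :
    ∃ a : Fin (n + 1) → K, a ≠ 0 ∧ ∀ x, ∑ k, a k * f (x + g k) = 0 := by
  let v : Fin (n + 1) → translateSpan K f := fun k =>
    ⟨fun x => f (x + g k), Submodule.subset_span ⟨g k, rfl⟩⟩
  have hdep : ¬ LinearIndependent K v := fun hli => by
    simpa [hrank] using hli.fintype_card_le_finrank
  obtain ⟨a, hsum, i, hi⟩ := Fintype.not_linearIndependent_iff.mp hdep
  refine ⟨a, fun ha => hi (congrFun ha i), fun x => ?_⟩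
  simpa [v, Finset.sum_apply] using congrArg (fun u : translateSpan K f => (u : G → K) x) hsum

theorem det_hankel_eq_zero_of_sum_mul_eq_zero {K : Type*} [CommRing K] [IsDomain K] {f : G → K} {n : ℕ}
    {h : G} {a : Fin (n + 1) → K} (ha : a ≠ 0)
    (hrec : ∀ x, ∑ k : Fin (n + 1), a k * f (x + (k : ℕ) • h) = 0) (x : G) :
    det (of fun i j : Fin (n + 1) => f (x + ((i : ℕ) + (j : ℕ)) • h)) = 0 := by
  refine exists_vecMul_eq_zero_iff.mp ⟨a, ha, funext fun j => ?_⟩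
  simpa [vecMul, dotProduct, add_smul, add_comm, add_left_comm, add_assoc]
    using hrec (x + (j : ℕ) • h)

end TranslateSpan

theorem stmt_15_general (d n : ℕ) (f : (Fin d → ℝ) → ℂ)
    (hfd : FiniteDimensional ℂ
      ↥(Submodule.span ℂ (Set.range fun h : Fin d → ℝ => fun x : Fin d → ℝ => f (x + h))))
    (hrank : Module.finrank ℂ
      ↥(Submodule.span ℂ (Set.range fun h : Fin d → ℝ => fun x : Fin d → ℝ => f (x + h)))
      = n) :
    (∀ h : Fin d → ℝ, ∃ a : Fin (n + 1) → ℂ, a ≠ 0 ∧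
      ∀ x : Fin d → ℝ, ∑ k : Fin (n + 1), a k * f (x + (k : ℕ) • h) = 0) ∧
    ∀ x h : Fin d → ℝ,
      Matrix.det (Matrix.of fun i j : Fin (n + 1) =>
        f (x + ((i : ℕ) + (j : ℕ)) • h)) = 0 := by
  have : FiniteDimensional ℂ (translateSpan ℂ f) := hfd
  have hrec (h : Fin d → ℝ) := exists_ne_zero_sum_mul_translate_eq_zero (f := f) hrank
    fun k => (k : ℕ) • h
  refine ⟨hrec, fun x h => ?_⟩
  obtain ⟨a, ha, hsum⟩ := hrec h
  exact det_hankel_eq_zero_of_sum_mul_eq_zero ha hsum x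

/-- If the span of all translates of a continuous `f : ℝ^d → ℂ` is finite-dimensional of
dimension `n`, then for every `h` there is a nontrivial relation
`a₀(h) f(x) + ⋯ + aₙ(h) f(x+nh) = 0` for all `x`; consequently `f` satisfies the
Popoviciu–Ionescu functional equation of order `n` in `ℝ^d`. -/
theorem stmt_15 (d n : ℕ) (f : (Fin d → ℝ) → ℂ) (hf : Continuous f)
    (hfd : FiniteDimensional ℂ
      ↥(Submodule.span ℂ (Set.range fun h : Fin d → ℝ => fun x : Fin d → ℝ => f (x + h))))
    (hrank : Module.finrank ℂ
      ↥(Submodule.span ℂ (Set.range fun h : Fin d → ℝ => fun x : Fin d → ℝ => f (x + h)))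
      = n) :
    (∀ h : Fin d → ℝ, ∃ a : Fin (n + 1) → ℂ, a ≠ 0 ∧
      ∀ x : Fin d → ℝ, ∑ k : Fin (n + 1), a k * f (x + (k : ℕ) • h) = 0) ∧
    ∀ x h : Fin d → ℝ,
      Matrix.det (Matrix.of fun i j : Fin (n + 1) =>
        f (x + ((i : ℕ) + (j : ℕ)) • h)) = 0 :=
  stmt_15_general d n f hfd hrank
end
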